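/- Let A be an n×n real symmetric positive semidefinite matrix with eigenvalues λ_1 ≥ … ≥ λ_n and λ_k > 0, and let W₁ ∈ ℝ^{n×k} be a matrix whose columns are orthonormal eigenvectors of A associated with λ_1, …, λ_k. Let X ∈ ℝ^{n×k} be such that XᵀAX is invertible and σ_min(W₁ᵀX) > 0. Then ‖A X (XᵀAX)^{-1}‖₂ ≤ (λ_1/λ_k)^{1/2} / σ_min(W₁ᵀX). -/

import Mathlib

open Matrix

/-- The spectral norm (largest singular value) of a real matrix,
as the `ℓ²→ℓ²` operator norm. -/
noncomputable def matSpectralNorm {m n : ℕ} (M : Matrix (Fin m) (Fin n) ℝ) : ℝ :=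
  ‖LinearMap.toContinuousLinearMap (Matrix.toEuclideanLin M)‖

/-- The smallest singular value of a square real matrix: `σ_min(M) = min_{‖x‖=1} ‖Mx‖`. -/
noncomputable def sigmaMin {n : ℕ} (M : Matrix (Fin n) (Fin n) ℝ) : ℝ :=
  ⨅ x : Metric.sphere (0 : EuclideanSpace ℝ (Fin n)) 1,
    ‖Matrix.toEuclideanLin M (x : EuclideanSpace ℝ (Fin n))‖

/-!
Write `S = XᵀAX` and `B = A^{1/2}`, so that `A X S⁻¹ = B (B X S⁻¹)`. A matrix `M` with
`MᵀM ≤ c` in the Loewner order has `‖M‖ ≤ √c`; here `BᵀB = A ≤ λ₁` and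
`(B X S⁻¹)ᵀ (B X S⁻¹) = S⁻¹`. As `W₁W₁ᵀ` is the orthogonal projection onto eigenvectors of `A`
with eigenvalues `≥ λ_k`, `A ≥ λ_k W₁W₁ᵀ`; hence `S ≥ λ_k (W₁ᵀX)ᵀ(W₁ᵀX) ≥ λ_k σ_min(W₁ᵀX)²`
and `S⁻¹ ≤ 1 / (λ_k σ_min(W₁ᵀX)²)`.
-/

open WithLp
open scoped Matrix.Norms.L2Operator MatrixOrder

namespace Matrix

variable {m n : Type*}

theorem posDef_of_smul_one_le [DecidableEq n] {S : Matrix n n ℝ} {c : ℝ} (hc : 0 < c)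
    (h : c • 1 ≤ S) : S.PosDef := by
  simpa using PosDef.posSemidef_add h (PosDef.one.smul hc)

variable [Fintype m] [Fintype n]

theorem dotProduct_mulVec_le_of_le {A B : Matrix n n ℝ} (h : A ≤ B) (v : n → ℝ) :
    v ⬝ᵥ (A *ᵥ v) ≤ v ⬝ᵥ (B *ᵥ v) := by
  have := (le_iff.mp h).dotProduct_mulVec_nonneg v
  rwa [star_trivial, sub_mulVec, dotProduct_sub, sub_nonneg] at this

theorem le_of_forall_dotProduct_mulVec_le {A B : Matrix n n ℝ} (hA : A.IsHermitian)
    (hB : B.IsHermitian) (h : ∀ v, v ⬝ᵥ (A *ᵥ v) ≤ v ⬝ᵥ (B *ᵥ v)) : A ≤ B := by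
  refine PosSemidef.of_dotProduct_mulVec_nonneg (hB.sub hA) fun v => ?_
  rw [star_trivial, sub_mulVec, dotProduct_sub, sub_nonneg]
  exact h v

theorem transpose_mul_mul_le_of_le {A B : Matrix m m ℝ} (h : A ≤ B) (X : Matrix m n ℝ) :
    Xᵀ * A * X ≤ Xᵀ * B * X := by
  have := (le_iff.mp h).conjTranspose_mul_mul_same X
  rwa [conjTranspose_eq_transpose_of_trivial, Matrix.mul_sub, Matrix.sub_mul] at this

theorem dotProduct_transpose_mul_self_mulVec (M : Matrix m n ℝ) (v : n → ℝ) :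
    v ⬝ᵥ ((Mᵀ * M) *ᵥ v) = (M *ᵥ v) ⬝ᵥ (M *ᵥ v) := by
  rw [← mulVec_mulVec, dotProduct_mulVec, vecMul_transpose]

theorem _root_.EuclideanSpace.norm_sq_eq_dotProduct (x : EuclideanSpace ℝ n) :
    ‖x‖ ^ 2 = ofLp x ⬝ᵥ ofLp x := by
  rw [← real_inner_self_eq_norm_sq, EuclideanSpace.inner_eq_star_dotProduct, star_trivial]

theorem l2_opNorm_le_sqrt_of_transpose_mul_self_le [DecidableEq n] {M : Matrix m n ℝ} {c : ℝ}
    (h : Mᵀ * M ≤ c • 1) : ‖M‖ ≤ √c := by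
  rw [l2_opNorm_def]
  refine ContinuousLinearMap.opNorm_le_bound _ (Real.sqrt_nonneg c) fun x => ?_
  have hx : ‖toEuclideanLin M x‖ ^ 2 ≤ c * ‖x‖ ^ 2 := by
    simpa [EuclideanSpace.norm_sq_eq_dotProduct, ← dotProduct_transpose_mul_self_mulVec,
      smul_mulVec] using dotProduct_mulVec_le_of_le h (ofLp x)
  calc ‖toEuclideanLin M x‖ = √(‖toEuclideanLin M x‖ ^ 2) :=
        (Real.sqrt_sq (norm_nonneg _)).symm
    _ ≤ √(c * ‖x‖ ^ 2) := Real.sqrt_le_sqrt hx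
    _ = √c * ‖x‖ := by rw [Real.sqrt_mul' c (sq_nonneg _), Real.sqrt_sq (norm_nonneg _)]

theorem inv_le_inv_smul_one_of_smul_one_le [DecidableEq n] {S : Matrix n n ℝ} {c : ℝ}
    (hc : 0 < c) (h : c • 1 ≤ S) : S⁻¹ ≤ c⁻¹ • 1 := by
  have hS := posDef_of_smul_one_le hc h
  refine le_of_forall_dotProduct_mulVec_le hS.isHermitian.inv
    (isHermitian_one.smul (.all _)) fun v => ?_
  set u := S⁻¹ *ᵥ v
  have hSu : S *ᵥ u = v := by
    rw [mulVec_mulVec, mul_nonsing_inv _ ((isUnit_iff_isUnit_det S).mp hS.isUnit), one_mulVec]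
  have hcu : c * (u ⬝ᵥ u) ≤ u ⬝ᵥ v := by
    simpa [hSu, smul_mulVec] using dotProduct_mulVec_le_of_le h u
  -- expanding `0 ≤ ‖v - c u‖²` and using `hcu` gives `c (u ⬝ v) ≤ ‖v‖²`
  have hvcu : 0 ≤ (v - c • u) ⬝ᵥ (v - c • u) := by
    simpa using dotProduct_self_star_nonneg (v - c • u)
  simp only [sub_dotProduct, dotProduct_sub, smul_dotProduct, dotProduct_smul, smul_eq_mul,
    dotProduct_comm v u] at hvcu
  rw [dotProduct_comm v, smul_mulVec, one_mulVec, dotProduct_smul, smul_eq_mul,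
    le_inv_mul_iff₀ hc]
  nlinarith

theorem l2_opNorm_mul_mul_inv_le [DecidableEq m] [DecidableEq n] {A : Matrix m m ℝ}
    {X : Matrix m n ℝ} {a c : ℝ} (hA : A.PosSemidef) (hAa : A ≤ a • 1) (hc : 0 < c)
    (hS : c • 1 ≤ Xᵀ * A * X) : ‖A * X * (Xᵀ * A * X)⁻¹‖ ≤ √(a / c) := by
  set S := Xᵀ * A * X
  set B := CFC.sqrt A
  have hBB : B * B = A := CFC.sqrt_mul_sqrt_self A hA.nonneg
  have hBT : Bᵀ = B := by
    rw [← conjTranspose_eq_transpose_of_trivial]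
    exact (CFC.sqrt_nonneg A).posSemidef.isHermitian.eq
  have hSpos := posDef_of_smul_one_le hc hS
  have hSinvT : S⁻¹ᵀ = S⁻¹ := by
    rw [← conjTranspose_eq_transpose_of_trivial]
    exact hSpos.isHermitian.inv.eq
  have hSS : S * S⁻¹ = 1 := mul_nonsing_inv _ ((isUnit_iff_isUnit_det S).mp hSpos.isUnit)
  have hB : ‖B‖ ≤ √a := l2_opNorm_le_sqrt_of_transpose_mul_self_le (by rwa [hBT, hBB])
  have hY : ‖B * X * S⁻¹‖ ≤ √c⁻¹ := by
    refine l2_opNorm_le_sqrt_of_transpose_mul_self_le ?_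
    calc (B * X * S⁻¹)ᵀ * (B * X * S⁻¹) = S⁻¹ * (Xᵀ * (B * B) * X) * S⁻¹ := by
          simp only [transpose_mul, hSinvT, hBT, Matrix.mul_assoc]
      _ = S⁻¹ := by rw [hBB, Matrix.mul_assoc, hSS, Matrix.mul_one]
      _ ≤ c⁻¹ • 1 := inv_le_inv_smul_one_of_smul_one_le hc hS
  calc ‖A * X * S⁻¹‖ = ‖B * (B * X * S⁻¹)‖ := by
        rw [← hBB]; simp only [Matrix.mul_assoc]
    _ ≤ ‖B‖ * ‖B * X * S⁻¹‖ := l2_opNorm_mul _ _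
    _ ≤ √a * √c⁻¹ := mul_le_mul hB hY (norm_nonneg _) (Real.sqrt_nonneg _)
    _ = √(a / c) := by rw [← Real.sqrt_mul' a (inv_nonneg.mpr hc.le), div_eq_mul_inv]

theorem le_smul_one_of_eq_mul_diagonal_mul_transpose [DecidableEq n] {A W : Matrix n n ℝ}
    {d : n → ℝ} {a : ℝ} (hW : Wᵀ * W = 1) (hA : A = W * diagonal d * Wᵀ)
    (hd : ∀ i, d i ≤ a) : A ≤ a • 1 := by
  have hdiag : (diagonal fun i => a - d i).PosSemidef :=
    posSemidef_diagonal_iff.mpr fun i => sub_nonneg.mpr (hd i)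
  have hsub : a • 1 - A = W * diagonal (fun i => a - d i) * Wᵀ := by
    rw [hA, ← diagonal_sub, Matrix.mul_sub, Matrix.sub_mul, ← smul_one_eq_diagonal,
      Matrix.mul_smul, Matrix.mul_one, Matrix.smul_mul, mul_eq_one_comm.mp hW]
  rw [le_iff, hsub]
  simpa using hdiag.mul_mul_conjTranspose_same W

theorem smul_mul_transpose_le_of_mul_eq_mul_diagonal [DecidableEq m] [DecidableEq n]
    {A : Matrix m m ℝ} {V : Matrix m n ℝ} {d : n → ℝ} {μ : ℝ} (hA : A.PosSemidef)
    (hV : Vᵀ * V = 1) (hAV : A * V = V * diagonal d) (hd : ∀ i, μ ≤ d i) :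
    μ • (V * Vᵀ) ≤ A := by
  set P := V * Vᵀ
  set Q := V * diagonal d * Vᵀ
  have hAT : Aᵀ = A := by rw [← conjTranspose_eq_transpose_of_trivial, hA.isHermitian.eq]
  have hPT : Pᵀ = P := by simp [P]
  -- `P` commutes with `A`, so `A` splits along `P` and `1 - P`
  have hAP : A * P = Q := by rw [← Matrix.mul_assoc, hAV]
  have hPA : P * A = Q := by
    simpa [hAT, hPT, Q, Matrix.mul_assoc] using congrArg transpose hAP
  have hQP : Q * P = Q := by
    simp only [Q, P, Matrix.mul_assoc, ← Matrix.mul_assoc Vᵀ V, hV, Matrix.one_mul]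
  have hcompl : (1 - P)ᵀ * A * (1 - P) = A - Q := by
    simp only [transpose_sub, transpose_one, hPT, Matrix.sub_mul, Matrix.mul_sub, Matrix.one_mul,
      Matrix.mul_one, hAP, hPA, hQP]
    abel
  have hrange : V * diagonal (fun i => d i - μ) * Vᵀ = Q - μ • P := by
    rw [← diagonal_sub, ← smul_one_eq_diagonal, Matrix.mul_sub, Matrix.sub_mul, Matrix.mul_smul,
      Matrix.mul_one, Matrix.smul_mul]
  have hcomplPSD : ((1 - P)ᵀ * A * (1 - P)).PosSemidef := by
    rw [← conjTranspose_eq_transpose_of_trivial]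
    exact hA.conjTranspose_mul_mul_same (1 - P)
  have hrangePSD : (V * diagonal (fun i => d i - μ) * Vᵀ).PosSemidef := by
    rw [← conjTranspose_eq_transpose_of_trivial]
    exact (posSemidef_diagonal_iff.mpr fun i => sub_nonneg.mpr (hd i)).mul_mul_conjTranspose_same V
  rw [le_iff, show A - μ • P =
      (1 - P)ᵀ * A * (1 - P) + V * diagonal (fun i => d i - μ) * Vᵀ by
    rw [hcompl, hrange]; abel]
  exact hcomplPSD.add hrangePSD

end Matrix

theorem sigmaMin_nonneg {n : ℕ} (M : Matrix (Fin n) (Fin n) ℝ) : 0 ≤ sigmaMin M :=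
  Real.iInf_nonneg fun _ => norm_nonneg _

theorem sigmaMin_mul_norm_le {n : ℕ} (M : Matrix (Fin n) (Fin n) ℝ)
    (x : EuclideanSpace ℝ (Fin n)) : sigmaMin M * ‖x‖ ≤ ‖toEuclideanLin M x‖ := by
  rcases eq_or_ne x 0 with rfl | hx
  · simp
  have hx' : 0 < ‖x‖ := norm_pos_iff.mpr hx
  have hu : ‖x‖⁻¹ • x ∈ Metric.sphere (0 : EuclideanSpace ℝ (Fin n)) 1 := by
    simp [norm_smul, hx'.ne']
  have hbdd : BddBelow (Set.range fun u : Metric.sphere (0 : EuclideanSpace ℝ (Fin n)) 1 =>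
      ‖toEuclideanLin M (u : EuclideanSpace ℝ (Fin n))‖) :=
    ⟨0, by rintro _ ⟨u, rfl⟩; exact norm_nonneg _⟩
  have := ciInf_le hbdd ⟨_, hu⟩
  rwa [map_smul, norm_smul, norm_inv, norm_norm, le_inv_mul_iff₀ hx', mul_comm] at this

theorem sq_sigmaMin_smul_one_le {n : ℕ} (M : Matrix (Fin n) (Fin n) ℝ) :
    sigmaMin M ^ 2 • 1 ≤ Mᵀ * M := by
  refine le_of_forall_dotProduct_mulVec_le (isHermitian_one.smul (.all _))
    (by simpa using isHermitian_conjTranspose_mul_self M) fun v => ?_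
  have h := pow_le_pow_left₀ (mul_nonneg (sigmaMin_nonneg M) (norm_nonneg _))
    (sigmaMin_mul_norm_le M (toLp 2 v)) 2
  simpa [mul_pow, EuclideanSpace.norm_sq_eq_dotProduct, dotProduct_transpose_mul_self_mulVec,
    smul_mulVec] using h

theorem mul_sq_sigmaMin_smul_one_le_transpose_mul_mul {n k : ℕ} {A : Matrix (Fin n) (Fin n) ℝ}
    {V : Matrix (Fin n) (Fin k) ℝ} {d : Fin k → ℝ} {μ : ℝ} (hA : A.PosSemidef)
    (hV : Vᵀ * V = 1) (hAV : A * V = V * diagonal d) (hμ : 0 ≤ μ) (hd : ∀ i, μ ≤ d i)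
    (X : Matrix (Fin n) (Fin k) ℝ) : (μ * sigmaMin (Vᵀ * X) ^ 2) • 1 ≤ Xᵀ * A * X :=
  calc (μ * sigmaMin (Vᵀ * X) ^ 2) • (1 : Matrix (Fin k) (Fin k) ℝ)
      = μ • (sigmaMin (Vᵀ * X) ^ 2 • 1) := mul_smul _ _ _
    _ ≤ μ • ((Vᵀ * X)ᵀ * (Vᵀ * X)) :=
      smul_le_smul_of_nonneg_left (sq_sigmaMin_smul_one_le _) hμ
    _ = Xᵀ * (μ • (V * Vᵀ)) * X := by
      simp only [transpose_mul, transpose_transpose, Matrix.mul_smul, Matrix.smul_mul,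
        Matrix.mul_assoc]
    _ ≤ Xᵀ * A * X :=
      transpose_mul_mul_le_of_le (smul_mul_transpose_le_of_mul_eq_mul_diagonal hA hV hAV hd) X

/-- Let `A` be an `n×n` real symmetric positive semidefinite matrix with eigenvalues
`λ_1 ≥ … ≥ λ_n` (eigendecomposition `A = W diag(λ) Wᵀ` with `W` orthogonal) and `λ_k > 0`,
and let `W₁ ∈ ℝ^{n×k}` have orthonormal columns which are eigenvectors of `A` associated
with `λ_1, …, λ_k`. Let `X ∈ ℝ^{n×k}` be such that `XᵀAX` is invertible and
`σ_min(W₁ᵀX) > 0`. Then `‖A X (XᵀAX)⁻¹‖₂ ≤ (λ_1/λ_k)^{1/2} / σ_min(W₁ᵀX)`. -/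
theorem stmt1 {n k : ℕ} (hk : 1 ≤ k) (hkn : k ≤ n)
    (A : Matrix (Fin n) (Fin n) ℝ) (hA : A.PosSemidef)
    (lam : Fin n → ℝ) (hlam : Antitone lam)
    (W : Matrix (Fin n) (Fin n) ℝ) (hW : Wᵀ * W = 1)
    (hAeig : A = W * Matrix.diagonal lam * Wᵀ)
    (hlamk : 0 < lam ⟨k - 1, by omega⟩)
    (W₁ : Matrix (Fin n) (Fin k) ℝ) (hW₁orth : W₁ᵀ * W₁ = 1)
    (hW₁eig : A * W₁ = W₁ * Matrix.diagonal (fun i : Fin k => lam (Fin.castLE hkn i)))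
    (X : Matrix (Fin n) (Fin k) ℝ)
    (hσ : 0 < sigmaMin (W₁ᵀ * X)) :
    matSpectralNorm (A * X * (Xᵀ * A * X)⁻¹) ≤
      Real.sqrt (lam ⟨0, by omega⟩ / lam ⟨k - 1, by omega⟩) / sigmaMin (W₁ᵀ * X) := by
  have hAle : A ≤ lam ⟨0, by omega⟩ • 1 :=
    le_smul_one_of_eq_mul_diagonal_mul_transpose hW hAeig fun i => hlam (Nat.zero_le _)
  have hXAX := mul_sq_sigmaMin_smul_one_le_transpose_mul_mul hA hW₁orth hW₁eig hlamk.le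
    (fun i => hlam (Fin.mk_le_mk.mpr (by omega))) X
  calc matSpectralNorm (A * X * (Xᵀ * A * X)⁻¹) = ‖A * X * (Xᵀ * A * X)⁻¹‖ := rfl
    _ ≤ √(lam ⟨0, by omega⟩ / (lam ⟨k - 1, by omega⟩ * sigmaMin (W₁ᵀ * X) ^ 2)) :=
      l2_opNorm_mul_mul_inv_le hA hAle (by positivity) hXAX
    _ = _ := by rw [← div_div, Real.sqrt_div' _ (sq_nonneg _), Real.sqrt_sq hσ.le]
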